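/- arXiv:1407.3558 — 4 statements merged into one kernel-verified Lean document; each statement's English description precedes it below -/
import Mathlib

section
/- Let V be a finite-dimensional nondegenerate quadratic space over a nonarchimedean local field F_v of characteristic 0 with ring of integers o_v, let L_v be an o_v-lattice of full rank in V, and let u_0 ∈ V with u_0 ∉ L_v. Then the image q(L_v + u_0) of the coset L_v + u_0 under the quadratic form q is an open and compact subset of F_v. -/
/-!
The coset `L + u₀` is compact, since `L` is finitely generated over the compact ring `ℤ_[p]`,
and open, since `L` contains the unit cube of a basis of `V` chosen inside `L`, which is open
because the norm of `ℚ_[p]` is ultrametric; it also avoids `0`. As `Q` is continuous, the image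
is compact. At a point `x ≠ 0` nondegeneracy gives `v` with `polar Q x v ≠ 0`, so
`t ↦ Q (x + t • v)` has nonzero derivative at `0` and, by the inverse function theorem, maps
every neighbourhood of `0` onto a neighbourhood of `Q x`; hence the image is open.
-/

open Filter Set
open scoped Topology

namespace QuadraticMap

variable {𝕜 V : Type*} [NontriviallyNormedField 𝕜]

theorem continuous_of_finiteDimensional [CompleteSpace 𝕜] [NormedAddCommGroup V]
    [NormedSpace 𝕜 V] [FiniteDimensional 𝕜 V] (Q : QuadraticForm 𝕜 V) : Continuous Q := by
  obtain ⟨B, rfl⟩ := LinearMap.BilinMap.toQuadraticMap_surjective Q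
  let B' : V →ₗ[𝕜] V →L[𝕜] 𝕜 := LinearMap.toContinuousLinearMap.toLinearMap ∘ₗ B
  exact B'.continuous_of_finiteDimensional.clm_apply continuous_id

variable [AddCommGroup V] [Module 𝕜 V]

theorem apply_add_smul (Q : QuadraticForm 𝕜 V) (x v : V) (t : 𝕜) :
    Q (x + t • v) = Q x + polar Q x v * t + Q v * t ^ 2 := by
  have h := polar_smul_right Q t x v
  rw [polar, QuadraticMap.map_smul, smul_eq_mul, smul_eq_mul] at h
  linear_combination h

theorem hasStrictDerivAt_apply_add_smul (Q : QuadraticForm 𝕜 V) (x v : V) :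
    HasStrictDerivAt (fun t : 𝕜 => Q (x + t • v)) (polar Q x v) 0 := by
  have h := (((hasStrictDerivAt_id (0 : 𝕜)).const_mul (polar Q x v)).const_add (Q x)).add
    ((hasStrictDerivAt_pow 2 (0 : 𝕜)).const_mul (Q v))
  simp only [apply_add_smul]
  exact h.congr_deriv (by simp)

variable [CompleteSpace 𝕜] [TopologicalSpace V] [ContinuousAdd V] [ContinuousSMul 𝕜 V]

theorem image_mem_nhds_of_polar_ne_zero (Q : QuadraticForm 𝕜 V) {x v : V}
    (hv : polar Q x v ≠ 0) {s : Set V} (hs : s ∈ 𝓝 x) : Q '' s ∈ 𝓝 (Q x) := by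
  have hmap := (Q.hasStrictDerivAt_apply_add_smul x v).map_nhds_eq hv
  simp only [zero_smul, add_zero] at hmap
  have hline : Tendsto (fun t : 𝕜 => x + t • v) (𝓝 0) (𝓝 x) := by
    simpa using (by fun_prop : Continuous fun t : 𝕜 => x + t • v).tendsto 0
  rw [← hmap, mem_map]
  filter_upwards [hline hs] with t ht using mem_image_of_mem Q ht

theorem isOpen_image_of_zero_notMem (Q : QuadraticForm 𝕜 V) (hQ : Q.polarBilin.SeparatingLeft)
    {s : Set V} (hs : IsOpen s) (h0 : (0 : V) ∉ s) : IsOpen (Q '' s) := by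
  rw [isOpen_iff_mem_nhds]
  rintro _ ⟨x, hx, rfl⟩
  obtain ⟨v, hv⟩ : ∃ v, polar Q x v ≠ 0 := by
    by_contra! h
    exact ne_of_mem_of_not_mem hx h0 (hQ x h)
  exact Q.image_mem_nhds_of_polar_ne_zero hv (hs.mem_nhds hx)

end QuadraticMap

namespace PadicInt

variable {p : ℕ} [Fact p.Prime] {V : Type*} [NormedAddCommGroup V] [NormedSpace ℚ_[p] V]
  [Module ℤ_[p] V] [IsScalarTower ℤ_[p] ℚ_[p] V]

theorem continuousSMul_of_isScalarTower : ContinuousSMul ℤ_[p] V :=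
  have : ContinuousSMul ℤ_[p] ℚ_[p] :=
    continuousSMul_of_algebraMap _ _ isOpenEmbedding_coe.continuous
  IsScalarTower.continuousSMul ℚ_[p]

theorem coe_smul (c : ℤ_[p]) (v : V) : (c : ℚ_[p]) • v = c • v :=
  algebraMap_smul ℚ_[p] c v

theorem isOpen_submodule_of_span_eq_top [FiniteDimensional ℚ_[p] V] (L : Submodule ℤ_[p] V)
    (hL : Submodule.span ℚ_[p] (L : Set V) = ⊤) : IsOpen (L : Set V) := by
  let b := Module.Basis.ofSpan hL.ge
  let U : Set V := b.equivFunL ⁻¹' univ.pi fun _ => Metric.closedBall 0 1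
  have hU : IsOpen U := (isOpen_set_pi finite_univ fun _ _ =>
    IsUltrametricDist.isOpen_closedBall 0 one_ne_zero).preimage b.equivFunL.continuous
  have hUL : U ⊆ L := by
    intro x hx
    rw [← b.sum_equivFun x]
    refine sum_mem fun i _ => ?_
    have hi : ‖b.equivFun x i‖ ≤ 1 := by simpa using hx i (mem_univ i)
    obtain ⟨c, hc⟩ : ∃ c : ℤ_[p], (c : ℚ_[p]) = b.equivFun x i := ⟨⟨_, hi⟩, rfl⟩
    rw [← hc, coe_smul]
    exact L.smul_mem _ (Module.Basis.ofSpan_subset hL.ge (mem_range_self i))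
  have h0U : (0 : V) ∈ U := fun i _ => by simp
  exact AddSubgroup.isOpen_of_mem_nhds L.toAddSubgroup (mem_of_superset (hU.mem_nhds h0U) hUL)

end PadicInt

/-- Let `V` be a finite-dimensional nondegenerate quadratic space over the
nonarchimedean local field `ℚ_[p]` with ring of integers `ℤ_[p]`, let `L` be a full-rank
`ℤ_[p]`-lattice in `V` and `u₀ ∈ V` with `u₀ ∉ L`.  Then the image `Q(L + u₀)` of the coset
`L + u₀` under the quadratic form `Q` is open and compact in `ℚ_[p]`. -/
theorem stmt_0 (p : ℕ) [Fact p.Prime] (V : Type*) [NormedAddCommGroup V]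
    [NormedSpace ℚ_[p] V] [FiniteDimensional ℚ_[p] V]
    [Module ℤ_[p] V] [IsScalarTower ℤ_[p] ℚ_[p] V]
    (Q : QuadraticForm ℚ_[p] V) (hQ : Q.polarBilin.Nondegenerate)
    (L : Submodule ℤ_[p] V) (hfg : L.FG)
    (hfull : Submodule.span ℚ_[p] (L : Set V) = ⊤)
    (u₀ : V) (hu₀ : u₀ ∉ L) :
    IsOpen (Q '' {x : V | ∃ l ∈ L, x = l + u₀}) ∧
      IsCompact (Q '' {x : V | ∃ l ∈ L, x = l + u₀}) := by
  have hcoset : {x : V | ∃ l ∈ L, x = l + u₀} = (· + u₀) '' L := by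
    ext x
    constructor <;> rintro ⟨l, hl, rfl⟩ <;> exact ⟨l, hl, rfl⟩
  have : ContinuousSMul ℤ_[p] V := PadicInt.continuousSMul_of_isScalarTower
  have hopen : IsOpen ((· + u₀) '' (L : Set V)) :=
    isOpenMap_add_right u₀ _ (PadicInt.isOpen_submodule_of_span_eq_top L hfull)
  have hcompact : IsCompact ((· + u₀) '' (L : Set V)) :=
    (Submodule.isCompact_of_fg hfg).image (continuous_add_const u₀)
  have h0 : (0 : V) ∉ (· + u₀) '' (L : Set V) := by
    rintro ⟨l, hl, hl0⟩
    exact hu₀ (by simpa [eq_neg_of_add_eq_zero_right hl0] using L.neg_mem hl)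
  rw [hcoset]
  exact ⟨Q.isOpen_image_of_zero_notMem hQ.1 hopen h0,
    hcompact.image Q.continuous_of_finiteDimensional⟩
end

section
/- Let V be a finite-dimensional nondegenerate quadratic space over a nonarchimedean local field F_v with ring of integers o_v and uniformizer π_v, let L_v be a full-rank lattice in V, and let u_0 ∈ V with u_0 ∉ L_v. Then there exists an open subgroup U of the unit group o_v^× such that α·U ⊆ q(L_v + u_0) for every α ∈ q(L_v + u_0). -/
/-!
Since `L` spans `V`, some `t ≠ 0` in `ℤ_[p]` has `t • u₀ ∈ L`. By Hensel's lemma every `u`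
close enough to `1` is a square `z ^ 2` with `z ≡ 1 mod t`; such a `z` maps the coset `L + u₀`
into itself, and `Q (z • x) = u * Q x`.
-/

open Polynomial

namespace PadicInt

variable {p : ℕ} [Fact p.Prime]

theorem dvd_of_norm_le {x t : ℤ_[p]} (ht : t ≠ 0) (h : ‖x‖ ≤ ‖t‖) : t ∣ x := by
  have ht' : (t : ℚ_[p]) ≠ 0 := by simpa using ht
  refine ⟨⟨x / t, ?_⟩, Subtype.ext ?_⟩
  · rw [norm_div]
    exact div_le_one_of_le₀ h (norm_nonneg _)
  · exact (mul_div_cancel₀ _ ht').symm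

theorem exists_sq_eq_of_norm_sub_one_lt {u : ℤ_[p]} (hu : ‖u - 1‖ < ‖(2 : ℤ_[p])‖ ^ 2) :
    ∃ z : ℤ_[p], z ^ 2 = u ∧ ‖z - 1‖ * ‖(2 : ℤ_[p])‖ = ‖u - 1‖ := by
  have hF : ∀ z : ℤ_[p], (X ^ 2 - C u).aeval z = z ^ 2 - u := by simp
  have hF' : ∀ z : ℤ_[p], (X ^ 2 - C u).derivative.aeval z = 2 * z := by
    simp [one_add_one_eq_two]
  obtain ⟨z, hz, hz1, -, -⟩ := hensels_lemma (F := X ^ 2 - C u) (a := 1)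
    (by rwa [hF, hF', one_pow, mul_one, ← norm_neg, neg_sub])
  rw [hF, sub_eq_zero] at hz
  rw [hF', mul_one] at hz1
  have hz2 : ‖z + 1‖ = ‖(2 : ℤ_[p])‖ := by
    rw [show z + 1 = (z - 1) + 2 by ring, norm_add_eq_max_of_ne hz1.ne, max_eq_right hz1.le]
  refine ⟨z, hz, ?_⟩
  rw [← hz2, ← norm_mul, ← hz]
  ring_nf

theorem exists_sq_eq_and_dvd_sub_one {t : ℤ_[p]} (ht : t ≠ 0) :
    ∃ n : ℕ, 0 < n ∧ ∀ u : ℚ_[p], ‖u - 1‖ ≤ (p : ℝ) ^ (-(n : ℤ)) →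
      ∃ z : ℤ_[p], (z : ℚ_[p]) ^ 2 = u ∧ t ∣ z - 1 := by
  have h2 : 0 < ‖(2 : ℤ_[p])‖ := norm_pos_iff.mpr two_ne_zero
  have h2le := norm_le_one (2 : ℤ_[p])
  have htle := norm_le_one t
  -- `‖u - 1‖ < ‖2‖ ^ 2 * ‖t‖` both makes Hensel's lemma apply and forces
  -- `‖z - 1‖ = ‖u - 1‖ / ‖2‖ ≤ ‖t‖`.
  obtain ⟨n, hn⟩ := exists_pow_neg_lt p (ε := ‖(2 : ℤ_[p])‖ ^ 2 * ‖t‖)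
    (by have := norm_pos_iff.mpr ht; positivity)
  refine ⟨n + 1, n.succ_pos, fun u hu ↦ ?_⟩
  replace hu : ‖u - 1‖ < ‖(2 : ℤ_[p])‖ ^ 2 * ‖t‖ :=
    hu.trans_lt <|
      (zpow_le_zpow_right₀ (mod_cast (Fact.out : p.Prime).one_le) (by omega)).trans_lt hn
  obtain ⟨u, rfl⟩ : ∃ v : ℤ_[p], (v : ℚ_[p]) = u := by
    have hu1 : ‖u - 1‖ ≤ 1 := by nlinarith [norm_nonneg t]
    refine ⟨⟨u, ?_⟩, rfl⟩
    simpa using (Padic.nonarchimedean (u - 1) 1).trans (max_le hu1 norm_one.le)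
  replace hu : ‖u - 1‖ < ‖(2 : ℤ_[p])‖ ^ 2 * ‖t‖ := hu
  obtain ⟨z, rfl, hz⟩ := exists_sq_eq_of_norm_sub_one_lt <|
    hu.trans_le (mul_le_of_le_one_right (sq_nonneg _) htle)
  refine ⟨z, (coe_pow z 2).symm, dvd_of_norm_le ht <| le_of_mul_le_mul_right ?_ h2⟩
  rw [hz]
  nlinarith [mul_le_mul_of_nonneg_right h2le (mul_nonneg h2.le (norm_nonneg t))]

end PadicInt

theorem Submodule.exists_smul_add_eq_add_of_dvd_sub_one {R M : Type*} [CommRing R]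
    [AddCommGroup M] [Module R M] {L : Submodule R M} {t z : R} {u₀ l : M}
    (ht : t • u₀ ∈ L) (hz : t ∣ z - 1) (hl : l ∈ L) :
    ∃ l' ∈ L, z • (l + u₀) = l' + u₀ := by
  obtain ⟨s, hs⟩ := hz
  refine ⟨z • l + s • t • u₀, L.add_mem (L.smul_mem z hl) (L.smul_mem s ht), ?_⟩
  rw [smul_smul, mul_comm, ← hs, smul_add, sub_smul, one_smul]
  abel

theorem stmt_1_general (p : ℕ) [Fact p.Prime] (V : Type*) [NormedAddCommGroup V]
    [NormedSpace ℚ_[p] V]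
    [Module ℤ_[p] V] [IsScalarTower ℤ_[p] ℚ_[p] V]
    (Q : QuadraticForm ℚ_[p] V)
    (L : Submodule ℤ_[p] V)
    (hfull : Submodule.span ℚ_[p] (L : Set V) = ⊤)
    (u₀ : V) :
    ∃ U : Set ℚ_[p], (∃ n : ℕ, 0 < n ∧ U = {u : ℚ_[p] | ‖u - 1‖ ≤ (p : ℝ) ^ (-(n : ℤ))}) ∧
      ∀ α ∈ Q '' {x : V | ∃ l ∈ L, x = l + u₀}, ∀ u ∈ U,
        α * u ∈ Q '' {x : V | ∃ l ∈ L, x = l + u₀} := by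
  obtain ⟨⟨t, ht0⟩, ht⟩ := multiple_mem_span_of_mem_localization_span
    (nonZeroDivisors ℤ_[p]) ℚ_[p] (L : Set V) u₀ (hfull ▸ Submodule.mem_top)
  rw [Submodule.span_eq, Submonoid.smul_def] at ht
  obtain ⟨n, hn, hsq⟩ := PadicInt.exists_sq_eq_and_dvd_sub_one (nonZeroDivisors.ne_zero ht0)
  refine ⟨_, ⟨n, hn, rfl⟩, ?_⟩
  rintro _ ⟨_, ⟨l, hl, rfl⟩, rfl⟩ u hu
  obtain ⟨z, rfl, hz⟩ := hsq u hu
  obtain ⟨l', hl', he⟩ := Submodule.exists_smul_add_eq_add_of_dvd_sub_one ht hz hl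
  refine ⟨_, ⟨l', hl', rfl⟩, ?_⟩
  rw [← he, ← algebraMap_smul ℚ_[p] z, QuadraticMap.map_smul, smul_eq_mul,
    PadicInt.algebraMap_apply, mul_comm, sq]

/-- With `V` a finite-dimensional nondegenerate quadratic space over `ℚ_[p]`,
`L` a full-rank `ℤ_[p]`-lattice and `u₀ ∉ L`, there is an open subgroup
`U = 1 + p^n ℤ_[p] = {u : ‖u - 1‖ ≤ p^{-n}}` of the unit group `ℤ_[p]ˣ` such that
`α·U ⊆ Q(L + u₀)` for every `α ∈ Q(L + u₀)`. -/
theorem stmt_1 (p : ℕ) [Fact p.Prime] (V : Type*) [NormedAddCommGroup V]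
    [NormedSpace ℚ_[p] V] [FiniteDimensional ℚ_[p] V]
    [Module ℤ_[p] V] [IsScalarTower ℤ_[p] ℚ_[p] V]
    (Q : QuadraticForm ℚ_[p] V) (hQ : Q.polarBilin.Nondegenerate)
    (L : Submodule ℤ_[p] V) (hfg : L.FG)
    (hfull : Submodule.span ℚ_[p] (L : Set V) = ⊤)
    (u₀ : V) (hu₀ : u₀ ∉ L) :
    ∃ U : Set ℚ_[p], (∃ n : ℕ, 0 < n ∧ U = {u : ℚ_[p] | ‖u - 1‖ ≤ (p : ℝ) ^ (-(n : ℤ))}) ∧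
      ∀ α ∈ Q '' {x : V | ∃ l ∈ L, x = l + u₀}, ∀ u ∈ U,
        α * u ∈ Q '' {x : V | ∃ l ∈ L, x = l + u₀} :=
  stmt_1_general p V Q L hfull u₀
end

section
/- Let V_v be a nondegenerate quadratic space over a nonarchimedean local field F_v with dim V_v ≥ 3, or dim V_v = 2 and −det(V_v) not a square in F_v^×. Let L_v be a full lattice in V_v and s a positive integer. Then for every nonzero x ∈ V_v with q(x) ≠ 0 (x anisotropic), there exists an anisotropic vector y ∈ V_v such that x − y is anisotropic, ⟨x − y, y⟩ = 0, and x − y ∈ π_v^s L_v. -/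
/-!
Since `x` is anisotropic and `dim V ≥ 2`, the hyperplane `x^⊥` is nonzero and carries an
anisotropic vector `ξ` (otherwise polarization would put `x^⊥` in the radical). For
`c = 1 + q(ξ)q(x)⁻¹u²` the vector `y = c⁻¹(x + uξ)` splits `x = y + (x - y)` orthogonally,
with `q(y) = c⁻¹q(x)` and `q(x - y) = c⁻¹u²q(ξ)`. Taking `u = p^s w`, we get
`x - y = p^s c⁻¹w (q(ξ)q(x)⁻¹u x - ξ)`, and since a full lattice absorbs all sufficiently small
multiples of any fixed vector, this lies in `p^s L` for every small enough `w ≠ 0`.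
-/

open Filter Topology Module QuadraticMap

theorem add_mul_sq_ne_zero {K : Type*} [Field K] {a b u : K} (ha : a ≠ 0)
    (hc : 1 + b / a * u ^ 2 ≠ 0) : a + b * u ^ 2 ≠ 0 := by
  rwa [div_mul_eq_mul_div, one_add_div ha, div_ne_zero_iff, and_iff_left ha] at hc

namespace QuadraticMap

variable {K V : Type*} [Field K] [AddCommGroup V] [Module K V] {Q : QuadraticForm K V} {x ξ : V}

theorem polar_eq_zero_of_forall_isotropic {w : V}
    (hx : polar Q x x ≠ 0) (hiso : ∀ z, polar Q x z = 0 → Q z = 0) (hw : polar Q x w = 0)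
    (v : V) : polar Q w v = 0 := by
  set z := v - (polar Q x v / polar Q x x) • x
  have hz : polar Q x z = 0 := by
    simp only [z, polar_sub_right, polar_smul_right, smul_eq_mul, div_mul_cancel₀ _ hx, sub_self]
  have hwz : polar Q w z = 0 := by
    have hsum : Q (w + z) = 0 := hiso _ (by rw [polar_add_right, hw, hz, add_zero])
    rw [polar, hsum, hiso w hw, hiso z hz, sub_zero, sub_zero]
  have hv : v = z + (polar Q x v / polar Q x x) • x := (sub_add_cancel _ _).symm
  rw [hv, polar_add_right, polar_smul_right, hwz, polar_comm _ w x, hw, smul_zero, add_zero]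

theorem exists_polar_eq_zero_ne_zero [NeZero (2 : K)] [FiniteDimensional K V]
    (hQ : Q.polarBilin.Nondegenerate) (hV : 2 ≤ finrank K V) (hx : Q x ≠ 0) :
    ∃ ξ, polar Q x ξ = 0 ∧ Q ξ ≠ 0 := by
  have hxx : polar Q x x ≠ 0 := by
    rw [polar_self, nsmul_eq_mul, Nat.cast_two]
    exact mul_ne_zero two_ne_zero hx
  have hker : LinearMap.ker (Q.polarBilin x) ≠ ⊥ :=
    LinearMap.ker_ne_bot_of_finrank_lt (by rw [finrank_self]; omega)
  obtain ⟨w, hw, hw0⟩ := (Submodule.ne_bot_iff _).mp hker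
  by_contra! hiso
  exact hw0 (hQ.1 w fun v => polar_eq_zero_of_forall_isotropic hxx hiso hw v)

theorem map_smul_add_smul_of_polar_eq_zero (h : polar Q x ξ = 0) (a b : K) :
    Q (a • x + b • ξ) = a ^ 2 * Q x + b ^ 2 * Q ξ := by
  have h' : polar Q (a • x) (b • ξ) = 0 := by
    rw [polar_smul_left, polar_smul_right, h, smul_zero, smul_zero]
  rw [polar, QuadraticMap.map_smul, QuadraticMap.map_smul, smul_eq_mul, smul_eq_mul] at h'
  linear_combination h'

-- The vector `y` of the construction, with `u` in place of `π_v^t`.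
variable (Q) in
def orthoPerturb (x ξ : V) (u : K) : V := (1 + Q ξ / Q x * u ^ 2)⁻¹ • (x + u • ξ)

variable {u : K}

theorem map_orthoPerturb (hxξ : polar Q x ξ = 0) (hx : Q x ≠ 0) :
    Q (orthoPerturb Q x ξ u) = (1 + Q ξ / Q x * u ^ 2)⁻¹ * Q x := by
  by_cases hc : 1 + Q ξ / Q x * u ^ 2 = 0
  · simp [orthoPerturb, hc]
  rw [orthoPerturb, smul_add, smul_smul, ← one_smul K x, smul_smul, mul_one,
    map_smul_add_smul_of_polar_eq_zero hxξ, one_smul]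
  have := add_mul_sq_ne_zero hx hc
  field_simp

theorem sub_orthoPerturb (hc : 1 + Q ξ / Q x * u ^ 2 ≠ 0) :
    x - orthoPerturb Q x ξ u =
      ((1 + Q ξ / Q x * u ^ 2)⁻¹ * u) • ((Q ξ / Q x * u) • x - ξ) := by
  rw [orthoPerturb]
  generalize Q ξ / Q x = a at hc ⊢
  match_scalars
  · field_simp
    ring
  · ring

theorem map_sub_orthoPerturb (hxξ : polar Q x ξ = 0) (hx : Q x ≠ 0)
    (hc : 1 + Q ξ / Q x * u ^ 2 ≠ 0) :
    Q (x - orthoPerturb Q x ξ u) = (1 + Q ξ / Q x * u ^ 2)⁻¹ * u ^ 2 * Q ξ := by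
  rw [sub_orthoPerturb hc, smul_sub, sub_eq_add_neg, ← neg_smul, smul_smul,
    map_smul_add_smul_of_polar_eq_zero hxξ]
  have := add_mul_sq_ne_zero hx hc
  field_simp
  ring

theorem polar_sub_orthoPerturb (hxξ : polar Q x ξ = 0) (hx : Q x ≠ 0)
    (hc : 1 + Q ξ / Q x * u ^ 2 ≠ 0) :
    polar Q (x - orthoPerturb Q x ξ u) (orthoPerturb Q x ξ u) = 0 := by
  rw [polar, sub_add_cancel, map_sub_orthoPerturb hxξ hx hc, map_orthoPerturb hxξ hx]
  have := add_mul_sq_ne_zero hx hc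
  field_simp
  ring

end QuadraticMap

section Lattice

variable {p : ℕ} [Fact p.Prime] {V : Type*} [AddCommGroup V] [Module ℚ_[p] V] [Module ℤ_[p] V]
  [IsScalarTower ℤ_[p] ℚ_[p] V]

theorem Submodule.eventually_smul_mem_of_span_eq_top {L : Submodule ℤ_[p] V}
    (hL : span ℚ_[p] (L : Set V) = ⊤) (v : V) : ∀ᶠ r in 𝓝 (0 : ℚ_[p]), r • v ∈ L := by
  have hv : v ∈ span ℚ_[p] (L : Set V) := hL ▸ mem_top
  induction hv using Submodule.span_induction with
  | mem v hv =>
    filter_upwards [Metric.closedBall_mem_nhds (0 : ℚ_[p]) one_pos] with r hr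
    have hr : ‖r‖ ≤ 1 := by simpa using hr
    let r' : ℤ_[p] := ⟨r, hr⟩
    rw [show r • v = r' • v from algebraMap_smul ℚ_[p] r' v]
    exact L.smul_mem r' hv
  | zero => simp
  | add v w _ _ hv hw =>
    filter_upwards [hv, hw] with r hv hw
    rw [smul_add]
    exact L.add_mem hv hw
  | smul c v _ hv =>
    filter_upwards [(continuous_mul_const c).tendsto' 0 0 (zero_mul c) hv] with r hr
    rwa [smul_smul]

end Lattice

theorem stmt_5_general (p : ℕ) [Fact p.Prime] (V : Type*) [AddCommGroup V]
    [Module ℚ_[p] V] [FiniteDimensional ℚ_[p] V]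
    [Module ℤ_[p] V] [IsScalarTower ℤ_[p] ℚ_[p] V]
    (Q : QuadraticForm ℚ_[p] V) (hQ : Q.polarBilin.Nondegenerate)
    (hdim : 3 ≤ Module.finrank ℚ_[p] V ∨
      (Module.finrank ℚ_[p] V = 2 ∧
        ∀ b : Module.Basis (Fin 2) ℚ_[p] V, ¬ IsSquare (-((LinearMap.toMatrix₂ b b) Q.polarBilin).det)))
    (L : Submodule ℤ_[p] V)
    (hfull : Submodule.span ℚ_[p] (L : Set V) = ⊤)
    (s : ℕ)
    (x : V) (hx : Q x ≠ 0) :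
    ∃ y : V, Q y ≠ 0 ∧ Q (x - y) ≠ 0 ∧ QuadraticMap.polar Q (x - y) y = 0 ∧
      ∃ l ∈ L, x - y = ((p : ℚ_[p]) ^ s) • l := by
  obtain ⟨ξ, hxξ, hξ⟩ :=
    exists_polar_eq_zero_ne_zero hQ (by rcases hdim with h | ⟨h, -⟩ <;> omega) hx
  set a := Q ξ / Q x
  set c : ℚ_[p] → ℚ_[p] := fun w => 1 + a * ((p : ℚ_[p]) ^ s * w) ^ 2
  have hc : ContinuousAt c 0 := by fun_prop
  have hc0 : c 0 ≠ 0 := by simp [c]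
  have hsmall : ∀ᶠ w in 𝓝 0, c w ≠ 0 ∧
      ((c w)⁻¹ * w * (a * ((p : ℚ_[p]) ^ s * w))) • x ∈ L ∧ ((c w)⁻¹ * w) • ξ ∈ L := by
    have h₂ : Tendsto (fun w => (c w)⁻¹ * w) (𝓝 0) (𝓝 0) := by
      simpa using (hc.tendsto.inv₀ hc0).mul tendsto_id
    have h₁ : Tendsto (fun w => (c w)⁻¹ * w * (a * ((p : ℚ_[p]) ^ s * w))) (𝓝 0) (𝓝 0) := by
      simpa using h₂.mul ((continuous_const.mul (continuous_const.mul continuous_id)).tendsto 0)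
    exact (hc.eventually_ne hc0).and
      ((h₁.eventually (Submodule.eventually_smul_mem_of_span_eq_top hfull x)).and
        (h₂.eventually (Submodule.eventually_smul_mem_of_span_eq_top hfull ξ)))
  obtain ⟨w, ⟨hcw, hxL, hξL⟩, hw⟩ :=
    ((hsmall.filter_mono nhdsWithin_le_nhds).and (self_mem_nhdsWithin (s := {0}ᶜ))).exists
  refine ⟨orthoPerturb Q x ξ ((p : ℚ_[p]) ^ s * w), ?_, ?_, polar_sub_orthoPerturb hxξ hx hcw,
    ((c w)⁻¹ * w) • ((a * ((p : ℚ_[p]) ^ s * w)) • x - ξ), ?_, ?_⟩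
  · exact (map_orthoPerturb hxξ hx).trans_ne (mul_ne_zero (inv_ne_zero hcw) hx)
  · rw [map_sub_orthoPerturb hxξ hx hcw]
    have hp : (p : ℚ_[p]) ^ s ≠ 0 :=
      pow_ne_zero _ (Nat.cast_ne_zero.2 (Fact.out : p.Prime).ne_zero)
    exact mul_ne_zero (mul_ne_zero (inv_ne_zero hcw) (pow_ne_zero 2 (mul_ne_zero hp hw))) hξ
  · rw [smul_sub, smul_smul]
    exact L.sub_mem hxL hξL
  · rw [sub_orthoPerturb hcw, smul_smul]
    congr 1
    ring

/-- Let `V` be a nondegenerate quadratic space over the nonarchimedean local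
field `ℚ_[p]` with `dim V ≥ 3`, or `dim V = 2` and `−det(V)` a nonsquare.  Let `L` be a full
`ℤ_[p]`-lattice and `s ≥ 1`.  For every anisotropic `x ≠ 0` there is an anisotropic `y` such
that `x − y` is anisotropic, `⟨x − y, y⟩ = 0`, and `x − y ∈ p^s L`. -/
theorem stmt_5 (p : ℕ) [Fact p.Prime] (V : Type*) [AddCommGroup V]
    [Module ℚ_[p] V] [FiniteDimensional ℚ_[p] V]
    [Module ℤ_[p] V] [IsScalarTower ℤ_[p] ℚ_[p] V]
    (Q : QuadraticForm ℚ_[p] V) (hQ : Q.polarBilin.Nondegenerate)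
    (hdim : 3 ≤ Module.finrank ℚ_[p] V ∨
      (Module.finrank ℚ_[p] V = 2 ∧
        ∀ b : Module.Basis (Fin 2) ℚ_[p] V, ¬ IsSquare (-((LinearMap.toMatrix₂ b b) Q.polarBilin).det)))
    (L : Submodule ℤ_[p] V) (hfg : L.FG)
    (hfull : Submodule.span ℚ_[p] (L : Set V) = ⊤)
    (s : ℕ) (hs : 0 < s)
    (x : V) (hx0 : x ≠ 0) (hx : Q x ≠ 0) :
    ∃ y : V, Q y ≠ 0 ∧ Q (x - y) ≠ 0 ∧ QuadraticMap.polar Q (x - y) y = 0 ∧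
      ∃ l ∈ L, x - y = ((p : ℚ_[p]) ^ s) • l :=
  stmt_5_general p V Q hQ hdim L hfull s x hx
end

section
/- Let V_v be a nondegenerate quadratic space over a nonarchimedean local field F_v with dim V_v ≥ 3 (or dim V_v = 2 with −det(V_v) a nonsquare). Let L_v be a full lattice and s a positive integer. For every isotropic vector x ≠ 0 in V_v (q(x) = 0), there exists an anisotropic vector y such that x − y is anisotropic, ⟨x − y, y⟩ = 0, and x − y ∈ π_v^s L_v. -/
/-!
Complete `x` to a hyperbolic pair `x, w` (`Q w = 0`, `polar Q x w = 2`). In dimension two this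
pair is a basis with Gram determinant `-4`, so `-det` is a square; in dimension at least three
the orthogonal complement of `span {x, w}` is nonzero and nondegenerate, hence contains an
anisotropic `h`. For `c ≠ 0` the vector `z = c² Q(h) w - c h` satisfies `Q z = c² Q(h)`,
`polar Q x z = 2 c² Q(h)`, so `y = x - z` has `Q y = -c² Q(h)` and `polar Q z y = 0`.
Taking `c` a high power of `p` puts `z` in `p^s L`, since `L` spans `V`.
-/

open QuadraticMap Filter

theorem QuadraticMap.map_sub_eq_add_sub_polar {R M N : Type*} [CommRing R] [AddCommGroup M]
    [AddCommGroup N] [Module R M] [Module R N] (Q : QuadraticMap R M N) (u v : M) :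
    Q (u - v) = Q u + Q v - polar Q u v := by
  rw [sub_eq_add_neg, QuadraticMap.map_add Q, QuadraticMap.map_neg, polar_neg_right]
  abel

section HyperbolicPair

variable {K V : Type*} [Field K] [AddCommGroup V] [Module K V] {Q : QuadraticForm K V}

theorem exists_isotropic_polar_eq_two [NeZero (2 : K)] (hQ : Q.polarBilin.Nondegenerate)
    {x : V} (hx0 : x ≠ 0) (hx : Q x = 0) : ∃ w, polar Q x w = 2 ∧ Q w = 0 := by
  obtain ⟨w₀, hw₀⟩ : ∃ w₀, polar Q x w₀ ≠ 0 := by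
    by_contra! h
    exact hx0 (hQ.1 x h)
  obtain ⟨w₁, hxw₁⟩ : ∃ w₁, polar Q x w₁ = 2 :=
    ⟨(2 / polar Q x w₀) • w₀, by rw [polar_smul_right, smul_eq_mul, div_mul_cancel₀ _ hw₀]⟩
  refine ⟨w₁ - (Q w₁ / 2) • x, ?_, ?_⟩
  · rw [polar_sub_right, hxw₁, polar_smul_right, polar_self, hx, smul_zero, smul_zero, sub_zero]
  · rw [map_sub_eq_add_sub_polar, QuadraticMap.map_smul, polar_smul_right, polar_comm, hxw₁, hx,
      smul_eq_mul, smul_eq_mul]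
    field_simp
    ring

variable {x w : V}

theorem linearIndependent_of_polar_eq_two [NeZero (2 : K)] (hx : Q x = 0) (hw : Q w = 0)
    (hxw : polar Q x w = 2) : LinearIndependent K ![x, w] := by
  rw [LinearIndependent.pair_iff]
  intro a b hab
  have hx' := congrArg (polar Q w) hab
  have hw' := congrArg (polar Q x) hab
  simp only [polar_add_right, polar_smul_right, polar_self, polar_comm Q w x, hxw, hx, hw,
    polar_zero_right, smul_eq_mul, smul_zero, mul_zero, add_zero, zero_add, mul_eq_zero,
    two_ne_zero, or_false] at hx' hw'
  exact ⟨hx', hw'⟩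

theorem exists_basis_isSquare_neg_det_of_finrank_eq_two [NeZero (2 : K)]
    (hdim : Module.finrank K V = 2) (hx : Q x = 0) (hw : Q w = 0) (hxw : polar Q x w = 2) :
    ∃ b : Module.Basis (Fin 2) K V,
      IsSquare (-(LinearMap.toMatrix₂ b b Q.polarBilin).det) := by
  refine ⟨basisOfLinearIndependentOfCardEqFinrank
    (linearIndependent_of_polar_eq_two hx hw hxw) (by simp [hdim]), 2, ?_⟩
  rw [Matrix.det_fin_two]
  simp only [LinearMap.toMatrix₂_apply, coe_basisOfLinearIndependentOfCardEqFinrank,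
    polarBilin_apply_apply, Matrix.cons_val_zero, Matrix.cons_val_one, polar_self, polar_comm Q w x,
    hxw, hx, hw]
  norm_num

variable (Q x w) in
/-- For a hyperbolic pair `x, w`, the projection onto the orthogonal complement of
`span {x, w}`. -/
def hyperbolicProj : V →ₗ[K] V :=
  LinearMap.id - (2⁻¹ : K) • ((Q.polarBilin w).smulRight x + (Q.polarBilin x).smulRight w)

theorem hyperbolicProj_apply (v : V) :
    hyperbolicProj Q x w v = v - (2⁻¹ : K) • (polar Q w v • x + polar Q x v • w) := by
  simp [hyperbolicProj]

theorem polar_hyperbolicProj_fst [NeZero (2 : K)] (hx : Q x = 0)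
    (hxw : polar Q x w = 2) (v : V) : polar Q x (hyperbolicProj Q x w v) = 0 := by
  rw [hyperbolicProj_apply, polar_sub_right, polar_smul_right, polar_add_right, polar_smul_right,
    polar_smul_right, polar_self, hx, hxw]
  simp only [smul_zero, smul_eq_mul, mul_zero, zero_add, mul_comm _ (2 : K),
    inv_mul_cancel_left₀ (two_ne_zero' K), sub_self]

theorem polar_hyperbolicProj_snd [NeZero (2 : K)] (hw : Q w = 0)
    (hxw : polar Q x w = 2) (v : V) : polar Q w (hyperbolicProj Q x w v) = 0 := by
  rw [hyperbolicProj_apply, polar_sub_right, polar_smul_right, polar_add_right, polar_smul_right,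
    polar_smul_right, polar_self, hw, polar_comm Q w x, hxw]
  simp only [smul_zero, smul_eq_mul, mul_zero, add_zero, mul_comm _ (2 : K),
    inv_mul_cancel_left₀ (two_ne_zero' K), sub_self]

theorem sub_hyperbolicProj_mem_span (v : V) :
    v - hyperbolicProj Q x w v ∈ Submodule.span K {x, w} := by
  rw [hyperbolicProj_apply, sub_sub_cancel]
  exact Submodule.smul_mem _ _ (Submodule.add_mem _
    (Submodule.smul_mem _ _ (Submodule.subset_span (by simp)))
    (Submodule.smul_mem _ _ (Submodule.subset_span (by simp))))

theorem exists_anisotropic_orthogonal_of_two_lt_finrank [NeZero (2 : K)] [FiniteDimensional K V]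
    (hQ : Q.polarBilin.Nondegenerate) (hdim : 2 < Module.finrank K V) (hx : Q x = 0)
    (hw : Q w = 0) (hxw : polar Q x w = 2) :
    ∃ h, polar Q x h = 0 ∧ polar Q w h = 0 ∧ Q h ≠ 0 := by
  by_contra! hiso
  have hQP (v : V) : Q (hyperbolicProj Q x w v) = 0 :=
    hiso _ (polar_hyperbolicProj_fst hx hxw v) (polar_hyperbolicProj_snd hw hxw v)
  -- With `P = hyperbolicProj Q x w`: `polar Q (P v) v' = polar Q (P v) (P v')`, which vanishes
  -- by polarization since `Q ∘ P = 0`.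
  have hP (v : V) : hyperbolicProj Q x w v = 0 := by
    refine hQ.1 _ fun v' => ?_
    have hspan : polar Q (hyperbolicProj Q x w v) (v' - hyperbolicProj Q x w v') = 0 := by
      refine Submodule.span_induction ?_ ?_ ?_ ?_ (sub_hyperbolicProj_mem_span v')
      · rintro _ (rfl | rfl)
        · rw [polar_comm]; exact polar_hyperbolicProj_fst hx hxw v
        · rw [polar_comm]; exact polar_hyperbolicProj_snd hw hxw v
      · exact polar_zero_right _ _
      · intro a b _ _ ha hb; rw [polar_add_right, ha, hb, add_zero]
      · intro c a _ ha; rw [polar_smul_right, ha, smul_zero]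
    rw [polar_sub_right, sub_eq_zero] at hspan
    rw [polarBilin_apply_apply, hspan, polar, ← map_add, hQP, hQP, hQP, sub_self, sub_self]
  have htop : Submodule.span K {x, w} = ⊤ := eq_top_iff.2 fun v _ => by
    simpa [hP] using sub_hyperbolicProj_mem_span (Q := Q) (x := x) (w := w) v
  classical
  have hle := finrank_span_le_card (R := K) ({x, w} : Set V)
  rw [htop, finrank_top, Set.toFinset_insert, Set.toFinset_singleton] at hle
  have := hle.trans Finset.card_le_two
  omega

end HyperbolicPair

theorem anisotropic_of_hyperbolic_pair {K V : Type*} [Field K] [AddCommGroup V] [Module K V]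
    {Q : QuadraticForm K V} {x w h : V} (hx : Q x = 0) (hw : Q w = 0) (hxw : polar Q x w = 2)
    (hxh : polar Q x h = 0) (hwh : polar Q w h = 0) (hh : Q h ≠ 0) {c : K} (hc : c ≠ 0) :
    Q ((c ^ 2 * Q h) • w - c • h) ≠ 0 ∧ Q (x - ((c ^ 2 * Q h) • w - c • h)) ≠ 0 ∧
      polar Q ((c ^ 2 * Q h) • w - c • h) (x - ((c ^ 2 * Q h) • w - c • h)) = 0 := by
  set z := (c ^ 2 * Q h) • w - c • h
  have hQz : Q z = c ^ 2 * Q h := by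
    rw [map_sub_eq_add_sub_polar, QuadraticMap.map_smul, QuadraticMap.map_smul, polar_smul_left,
      polar_smul_right, hw, hwh, smul_eq_mul, smul_eq_mul, smul_eq_mul, smul_eq_mul]
    ring
  have hxz : polar Q x z = 2 * (c ^ 2 * Q h) := by
    rw [polar_sub_right, polar_smul_right, polar_smul_right, hxw, hxh, smul_eq_mul, smul_eq_mul]
    ring
  have hz0 : c ^ 2 * Q h ≠ 0 := mul_ne_zero (pow_ne_zero _ hc) hh
  refine ⟨hQz ▸ hz0, ?_, ?_⟩
  · rw [map_sub_eq_add_sub_polar, hx, hQz, hxz]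
    intro h0
    exact hz0 (by linear_combination -h0)
  · rw [polar_sub_right, polar_comm, hxz, polar_self, hQz, nsmul_eq_mul]
    push_cast
    ring

section Lattice

variable {p : ℕ} [Fact p.Prime] {V : Type*} [AddCommGroup V] [Module ℚ_[p] V] [Module ℤ_[p] V]
  [IsScalarTower ℤ_[p] ℚ_[p] V] {L : Submodule ℤ_[p] V}

theorem smul_mem_of_norm_le_one {c : ℚ_[p]} (hc : ‖c‖ ≤ 1) {v : V} (hv : v ∈ L) :
    c • v ∈ L := by
  obtain ⟨a, rfl⟩ : ∃ a : ℤ_[p], (a : ℚ_[p]) = c := ⟨⟨c, hc⟩, rfl⟩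
  rw [← PadicInt.algebraMap_apply, algebraMap_smul]
  exact L.smul_mem a hv

theorem norm_p_pow_le_one (n : ℕ) : ‖(p : ℚ_[p]) ^ n‖ ≤ 1 := by
  rw [norm_pow]
  exact pow_le_one₀ (norm_nonneg _) Padic.norm_p_lt_one.le

theorem eventually_pow_smul_mem (hL : Submodule.span ℚ_[p] (L : Set V) = ⊤) (v : V) :
    ∀ᶠ n in atTop, (p : ℚ_[p]) ^ n • v ∈ L := by
  have hv : v ∈ Submodule.span ℚ_[p] (L : Set V) := hL ▸ Submodule.mem_top
  induction hv using Submodule.span_induction with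
  | mem v hv =>
    exact Eventually.of_forall fun n => smul_mem_of_norm_le_one (norm_p_pow_le_one n) hv
  | zero => simp
  | add u v _ _ hu hv =>
    exact (hu.and hv).mono fun n h => by rw [smul_add]; exact L.add_mem h.1 h.2
  | smul c v _ hv =>
    have hp : (1 : ℝ) < p := by exact_mod_cast (Fact.out : p.Prime).one_lt
    obtain ⟨k, hk⟩ := pow_unbounded_of_one_lt ‖c‖ hp
    obtain ⟨N, hN⟩ := hv.exists_forall_of_atTop
    refine eventually_atTop.2 ⟨N + k, fun n hn => ?_⟩
    obtain ⟨m, rfl⟩ := Nat.exists_eq_add_of_le' hn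
    have hck : ‖(p : ℚ_[p]) ^ k * c‖ ≤ 1 := by
      rw [norm_mul, Padic.norm_p_pow, zpow_neg, zpow_natCast, inv_mul_le_one₀ (by positivity)]
      exact hk.le
    convert smul_mem_of_norm_le_one hck (hN (m + N) (Nat.le_add_left _ _)) using 1
    rw [smul_smul, smul_smul]
    congr 1
    ring

end Lattice

theorem stmt_6_general (p : ℕ) [Fact p.Prime] (V : Type*) [AddCommGroup V]
    [Module ℚ_[p] V] [FiniteDimensional ℚ_[p] V]
    [Module ℤ_[p] V] [IsScalarTower ℤ_[p] ℚ_[p] V]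
    (Q : QuadraticForm ℚ_[p] V) (hQ : Q.polarBilin.Nondegenerate)
    (hdim : 3 ≤ Module.finrank ℚ_[p] V ∨
      (Module.finrank ℚ_[p] V = 2 ∧
        ∀ b : Module.Basis (Fin 2) ℚ_[p] V, ¬ IsSquare (-((LinearMap.toMatrix₂ b b) Q.polarBilin).det)))
    (L : Submodule ℤ_[p] V)
    (hfull : Submodule.span ℚ_[p] (L : Set V) = ⊤)
    (s : ℕ)
    (x : V) (hx0 : x ≠ 0) (hx : Q x = 0) :
    ∃ y : V, Q y ≠ 0 ∧ Q (x - y) ≠ 0 ∧ QuadraticMap.polar Q (x - y) y = 0 ∧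
      ∃ l ∈ L, x - y = ((p : ℚ_[p]) ^ s) • l := by
  obtain ⟨w, hxw, hw⟩ := exists_isotropic_polar_eq_two hQ hx0 hx
  obtain ⟨h, hxh, hwh, hh⟩ : ∃ h, polar Q x h = 0 ∧ polar Q w h = 0 ∧ Q h ≠ 0 := by
    rcases hdim with hdim | ⟨hdim, hdet⟩
    · exact exists_anisotropic_orthogonal_of_two_lt_finrank hQ hdim hx hw hxw
    · obtain ⟨b, hb⟩ := exists_basis_isSquare_neg_det_of_finrank_eq_two hdim hx hw hxw
      exact absurd hb (hdet b)
  obtain ⟨N, hN⟩ := ((eventually_pow_smul_mem hfull (Q h • w)).and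
    (eventually_pow_smul_mem hfull h)).exists_forall_of_atTop
  have hc : (p : ℚ_[p]) ^ (s + N) ≠ 0 :=
    pow_ne_zero _ (by exact_mod_cast (Fact.out : p.Prime).ne_zero)
  obtain ⟨hz, hxz, hzxz⟩ := anisotropic_of_hyperbolic_pair hx hw hxw hxh hwh hh hc
  refine ⟨x - _, hxz, by rwa [sub_sub_cancel], by rwa [sub_sub_cancel],
    (p : ℚ_[p]) ^ (s + 2 * N) • Q h • w - (p : ℚ_[p]) ^ N • h,
    L.sub_mem (hN _ (by omega)).1 (hN _ le_rfl).2, ?_⟩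
  rw [sub_sub_cancel]
  module

/-- Let `V` be a nondegenerate quadratic space over the nonarchimedean local
field `ℚ_[p]` with `dim V ≥ 3` (or `dim V = 2` with `−det(V)` a nonsquare).  Let `L` be a full
`ℤ_[p]`-lattice and `s ≥ 1`.  For every isotropic `x ≠ 0` (`Q x = 0`) there is an anisotropic
`y` such that `x − y` is anisotropic, `⟨x − y, y⟩ = 0`, and `x − y ∈ p^s L`. -/
theorem stmt_6 (p : ℕ) [Fact p.Prime] (V : Type*) [AddCommGroup V]
    [Module ℚ_[p] V] [FiniteDimensional ℚ_[p] V]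
    [Module ℤ_[p] V] [IsScalarTower ℤ_[p] ℚ_[p] V]
    (Q : QuadraticForm ℚ_[p] V) (hQ : Q.polarBilin.Nondegenerate)
    (hdim : 3 ≤ Module.finrank ℚ_[p] V ∨
      (Module.finrank ℚ_[p] V = 2 ∧
        ∀ b : Module.Basis (Fin 2) ℚ_[p] V, ¬ IsSquare (-((LinearMap.toMatrix₂ b b) Q.polarBilin).det)))
    (L : Submodule ℤ_[p] V) (hfg : L.FG)
    (hfull : Submodule.span ℚ_[p] (L : Set V) = ⊤)
    (s : ℕ) (hs : 0 < s)
    (x : V) (hx0 : x ≠ 0) (hx : Q x = 0) :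
    ∃ y : V, Q y ≠ 0 ∧ Q (x - y) ≠ 0 ∧ QuadraticMap.polar Q (x - y) y = 0 ∧
      ∃ l ∈ L, x - y = ((p : ℚ_[p]) ^ s) • l :=
  stmt_6_general p V Q hQ hdim L hfull s x hx0 hx
end
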